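/- arXiv:1601.08012 — 4 statements merged into one kernel-verified Lean document; each statement's English description precedes it below -/
import Mathlib

section
/- Let V be the complexification of a real Hilbert space, U ⊆ V a one-dimensional subspace, and T : U → V a bounded linear operator with W(T) ⊆ {z ∈ ℂ : Re z ≥ 0}. Then there exists a bounded linear extension T̂ : V → V of T with ‖T̂‖ ≤ √2 ‖T‖ and W(T̂) ⊆ {z ∈ ℂ : Re z ≥ 0}. -/
open scoped InnerProductSpace

/-!
Let `e` be a unit vector spanning `U` and write `w = T e = α e + p` with `α = ⟪e, w⟫` and
`p ⊥ e`. The extension `T̂ v = ⟪e, v⟫ w - ⟪p, v⟫ e` sends `e` to `w`, and its Hermitian part is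
`Re α · e ⊗ e*`, so `Re ⟪T̂ v, v⟫ = Re α · |⟪e, v⟫|² ≥ 0`. Writing `v = x e + r` with `r ⊥ e`,
we get `T̂ v = (x α - ⟪p, r⟫) e + x p`, and `|⟪p, r⟫| ≤ ‖p‖ ‖r‖` together with
`(a + b)² ≤ 2a² + 2b²` gives `‖T̂ v‖² ≤ 2 (|α|² + ‖p‖²)(|x|² + ‖r‖²) = 2 ‖w‖² ‖v‖²`.
-/

section LineExtension

variable {𝕜 E : Type*} [RCLike 𝕜] [NormedAddCommGroup E] [InnerProductSpace 𝕜 E]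

local notation "⟪" x ", " y "⟫" => inner 𝕜 x y

theorem norm_smul_add_sq_of_inner_eq_zero {e p : E} (he : ‖e‖ = 1) (hep : ⟪e, p⟫ = 0) (a : 𝕜) :
    ‖a • e + p‖ ^ 2 = ‖a‖ ^ 2 + ‖p‖ ^ 2 := by
  have h := norm_add_sq_eq_norm_sq_add_norm_sq_of_inner_eq_zero (𝕜 := 𝕜) (a • e) p
    (by rw [inner_smul_left, hep, mul_zero])
  rw [norm_smul, he, mul_one] at h
  simpa only [sq] using h

theorem inner_sub_inner_smul_eq_zero {e : E} (he : ‖e‖ = 1) (v : E) :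
    ⟪e, v - ⟪e, v⟫ • e⟫ = 0 := by
  rw [inner_sub_right, inner_smul_right, inner_self_eq_norm_sq_to_K, he]
  simp

variable (𝕜) in
noncomputable def lineExtension (e w : E) : E →L[𝕜] E :=
  (innerSL 𝕜 e).smulRight w - (innerSL 𝕜 (w - ⟪e, w⟫ • e)).smulRight e

theorem lineExtension_apply (e w v : E) :
    lineExtension 𝕜 e w v = ⟪e, v⟫ • w - ⟪w - ⟪e, w⟫ • e, v⟫ • e :=
  rfl

theorem lineExtension_apply_self {e : E} (he : ‖e‖ = 1) (w : E) : lineExtension 𝕜 e w e = w := by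
  rw [lineExtension_apply, inner_eq_zero_symm.mp (inner_sub_inner_smul_eq_zero he w), inner_self_eq_norm_sq_to_K, he]
  simp

theorem re_inner_lineExtension_apply (e w v : E) :
    RCLike.re ⟪lineExtension 𝕜 e w v, v⟫ = RCLike.re ⟪e, w⟫ * ‖⟪e, v⟫‖ ^ 2 := by
  rw [lineExtension_apply, inner_sub_left, inner_smul_left, inner_smul_left, inner_sub_left,
    inner_smul_left]
  simp only [map_sub, map_mul, RCLike.conj_conj, RCLike.mul_re, RCLike.mul_im, RCLike.conj_re,
    RCLike.conj_im, RCLike.norm_sq_eq_def]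
  ring

theorem norm_lineExtension_le {e : E} (he : ‖e‖ = 1) (w : E) :
    ‖lineExtension 𝕜 e w‖ ≤ √2 * ‖w‖ := by
  refine ContinuousLinearMap.opNorm_le_bound _ (by positivity) fun v => ?_
  set α := ⟪e, w⟫
  set p := w - α • e
  set x := ⟪e, v⟫
  set r := v - x • e
  set y := ⟪p, v⟫
  have hp : ⟪e, p⟫ = 0 := inner_sub_inner_smul_eq_zero he w
  have hr : ⟪e, r⟫ = 0 := inner_sub_inner_smul_eq_zero he v
  have hw : ‖w‖ ^ 2 = ‖α‖ ^ 2 + ‖p‖ ^ 2 := by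
    rw [← norm_smul_add_sq_of_inner_eq_zero he hp, add_sub_cancel]
  have hv : ‖v‖ ^ 2 = ‖x‖ ^ 2 + ‖r‖ ^ 2 := by
    rw [← norm_smul_add_sq_of_inner_eq_zero he hr, add_sub_cancel]
  have hy : ‖y‖ ≤ ‖p‖ * ‖r‖ := by
    have : y = ⟪p, r⟫ := by
      simp only [r, inner_sub_right, inner_smul_right, inner_eq_zero_symm.mp hp, mul_zero,
        sub_zero, y]
    rw [this]
    exact norm_inner_le_norm p r
  have hSv : ‖lineExtension 𝕜 e w v‖ ^ 2 = ‖x * α - y‖ ^ 2 + ‖x‖ ^ 2 * ‖p‖ ^ 2 := by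
    have hsplit : lineExtension 𝕜 e w v = (x * α - y) • e + x • p := by
      simp only [lineExtension_apply, p, sub_smul, mul_smul, smul_sub]
      abel
    rw [hsplit, norm_smul_add_sq_of_inner_eq_zero he (by rw [inner_smul_right, hp, mul_zero]),
      norm_smul, mul_pow]
  have hxy : ‖x * α - y‖ ≤ ‖x‖ * ‖α‖ + ‖p‖ * ‖r‖ :=
    (norm_sub_le _ _).trans (by rw [norm_mul]; gcongr)
  have : ‖lineExtension 𝕜 e w v‖ ^ 2 ≤ (√2 * ‖w‖ * ‖v‖) ^ 2 := by
    rw [mul_pow, mul_pow, Real.sq_sqrt zero_le_two, hSv, hw, hv]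
    nlinarith [sq_nonneg (‖x‖ * ‖α‖ - ‖p‖ * ‖r‖), pow_le_pow_left₀ (norm_nonneg _) hxy 2,
      norm_nonneg x, norm_nonneg α, norm_nonneg p, norm_nonneg r]
  exact le_of_sq_le_sq this (by positivity)

theorem exists_norm_eq_one_forall_eq_inner_smul (h : Module.finrank 𝕜 E = 1) :
    ∃ e : E, ‖e‖ = 1 ∧ ∀ u : E, u = ⟪e, u⟫ • e := by
  have : FiniteDimensional 𝕜 E := Module.finite_of_finrank_eq_succ h
  let b := (stdOrthonormalBasis 𝕜 E).reindex (finCongr h)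
  refine ⟨b 0, b.orthonormal.1 0, fun u => ?_⟩
  simpa only [Fin.sum_univ_one] using (b.sum_repr' u).symm

end LineExtension

theorem stmt_3_general {V : Type*} [NormedAddCommGroup V] [InnerProductSpace ℂ V]
    (U : Submodule ℂ V) (hU : Module.finrank ℂ U = 1) (T : U →L[ℂ] V)
    (hT : ∀ u : U, ‖u‖ = 1 → 0 ≤ (⟪T u, (u : V)⟫_ℂ).re) :
    ∃ That : V →L[ℂ] V, (∀ u : U, That u = T u) ∧ ‖That‖ ≤ Real.sqrt 2 * ‖T‖ ∧
      ∀ v : V, ‖v‖ = 1 → 0 ≤ (⟪That v, v⟫_ℂ).re := by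
  obtain ⟨e, he, hspan⟩ := exists_norm_eq_one_forall_eq_inner_smul hU
  have he' : ‖(e : V)‖ = 1 := he
  refine ⟨lineExtension ℂ (e : V) (T e), fun u => ?_, ?_, fun v _ => ?_⟩
  · rw [hspan u, map_smul, Submodule.coe_smul, map_smul, lineExtension_apply_self he']
  · calc ‖lineExtension ℂ (e : V) (T e)‖ ≤ √2 * ‖T e‖ := norm_lineExtension_le he' _
      _ ≤ √2 * ‖T‖ := by gcongr; simpa only [he, mul_one] using T.le_opNorm e
  · have := re_inner_lineExtension_apply (𝕜 := ℂ) (e : V) (T e) v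
    rw [RCLike.re_to_complex, RCLike.re_to_complex] at this
    rw [this, ← inner_conj_symm, Complex.conj_re]
    exact mul_nonneg (hT e he) (sq_nonneg _)

/-- Let `V` be a complex Hilbert space (e.g. the complexification of a real Hilbert space),
`U ⊆ V` a one-dimensional subspace and `T : U → V` bounded linear with numerical range in the
closed right half-plane. Then `T` admits a bounded extension `T̂ : V → V` with
`‖T̂‖ ≤ √2 ‖T‖` and numerical range in the closed right half-plane. -/
theorem stmt_3 {V : Type*} [NormedAddCommGroup V] [InnerProductSpace ℂ V] [CompleteSpace V]
    (U : Submodule ℂ V) (hU : Module.finrank ℂ U = 1) (T : U →L[ℂ] V)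
    (hT : ∀ u : U, ‖u‖ = 1 → 0 ≤ (⟪T u, (u : V)⟫_ℂ).re) :
    ∃ That : V →L[ℂ] V, (∀ u : U, That u = T u) ∧ ‖That‖ ≤ Real.sqrt 2 * ‖T‖ ∧
      ∀ v : V, ‖v‖ = 1 → 0 ≤ (⟪That v, v⟫_ℂ).re :=
  stmt_3_general U hU T hT
end

section
/- Let V be the complexification of a real Hilbert space V_ℝ, let U ⊆ V be a one-dimensional subspace with U ∩ V_ℝ ≠ {0}, and let T : U → V be bounded linear with T(U ∩ V_ℝ) ⊆ V_ℝ and W(T) ⊆ {z ∈ ℂ : Re z ≥ ε} for some ε > 0. Then there exists a self-adjoint bounded extension T̂ : V → V of T with ‖T̂‖ ≤ √2 (‖T‖ + ε⁻¹‖T‖²) and numerical range W(T̂) ⊆ ℝ_{≥ 0}. -/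
open scoped InnerProductSpace ComplexConjugate ComplexOrder
open InnerProductSpace Module

/-!
Normalise a nonzero real vector of `U` to a real unit vector `e` and put `w = T e`. The number
`α = ⟪w, e⟫` is real because `e` and `w` are fixed by the conjugation, and `α ≥ ε` by the
numerical range hypothesis. The rank-one operator `α⁻¹ ⟪w, ·⟫ w` is then positive, sends `e` to
`w` (hence extends `T`, as `U` is spanned by `e`), and has norm `‖w‖² / α ≤ ‖T‖² / ε`.
-/

theorem LinearMap.ext_of_finrank_eq_one {K M N : Type*} [Field K] [AddCommGroup M] [Module K M]
    [AddCommGroup N] [Module K N] (hM : finrank K M = 1) {v : M} (hv : v ≠ 0)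
    {f g : M →ₗ[K] N} (h : f v = g v) : f = g := by
  ext u
  obtain ⟨c, rfl⟩ := (finrank_eq_one_iff_of_nonzero' v hv).mp hM u
  simp [h]

theorem exists_norm_eq_one_map_eq_self {V : Type*} [NormedAddCommGroup V] [NormedSpace ℂ V]
    (J : V →ₗ⋆[ℂ] V) {U : Submodule ℂ V} {u : U} (hu : u ≠ 0) (hJu : J u = u) :
    ∃ e : U, ‖e‖ = 1 ∧ J e = e :=
  ⟨(‖u‖⁻¹ : ℂ) • u, norm_smul_inv_norm hu, by
    rw [Submodule.coe_smul, map_smulₛₗ, hJu, ← Complex.ofReal_inv, Complex.conj_ofReal]⟩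

section RankOne

variable {𝕜 E : Type*} [RCLike 𝕜] [NormedAddCommGroup E] [InnerProductSpace 𝕜 E]

theorem InnerProductSpace.isPositive_inv_smul_rankOne_self {c : 𝕜} (hc : 0 < c) (w : E) :
    (c⁻¹ • rankOne 𝕜 w w).IsPositive :=
  (isPositive_rankOne_self w).smul_of_nonneg (RCLike.inv_pos_of_pos hc).le

theorem InnerProductSpace.inv_inner_smul_rankOne_self_apply {w e : E} (h : ⟪w, e⟫_𝕜 ≠ 0) :
    ((⟪w, e⟫_𝕜)⁻¹ • rankOne 𝕜 w w) e = w := by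
  simp [smul_smul, inv_mul_cancel₀ h]

end RankOne

theorem stmt_4_general {V : Type*} [NormedAddCommGroup V] [InnerProductSpace ℂ V]
    (J : V →ₗ⋆[ℂ] V)
    (hJinner : ∀ x y : V, ⟪J x, J y⟫_ℂ = conj ⟪x, y⟫_ℂ)
    (U : Submodule ℂ V) (hU : Module.finrank ℂ U = 1)
    (hUreal : ∃ u₀ : U, (u₀ : V) ≠ 0 ∧ J (u₀ : V) = (u₀ : V))
    (T : U →L[ℂ] V) (hTreal : ∀ u : U, J (u : V) = (u : V) → J (T u) = T u)
    (ε : ℝ) (hε : 0 < ε)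
    (hT : ∀ u : U, ‖u‖ = 1 → ε ≤ (⟪T u, (u : V)⟫_ℂ).re) :
    ∃ That : V →L[ℂ] V, (∀ u : U, That u = T u) ∧
      (∀ x y : V, ⟪That x, y⟫_ℂ = ⟪x, That y⟫_ℂ) ∧
      ‖That‖ ≤ Real.sqrt 2 * (‖T‖ + ε⁻¹ * ‖T‖ ^ 2) ∧
      ∀ v : V, ‖v‖ = 1 → (⟪That v, v⟫_ℂ).im = 0 ∧ 0 ≤ (⟪That v, v⟫_ℂ).re := by
  obtain ⟨u₀, hu₀, hJu₀⟩ := hUreal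
  obtain ⟨e, he, hJe⟩ := exists_norm_eq_one_map_eq_self J (u := u₀) (by simpa using hu₀) hJu₀
  set α := ⟪T e, (e : V)⟫_ℂ
  have hαε : ε ≤ α.re := hT e he
  have hα_real : α.im = 0 := by
    have h := hJinner (T e) e
    rw [hTreal e hJe, hJe] at h
    exact Complex.conj_eq_iff_im.mp h.symm
  have hα_pos : 0 < α := RCLike.pos_iff.mpr ⟨hε.trans_le hαε, hα_real⟩
  set S := α⁻¹ • rankOne ℂ (T e) (T e)
  have hS : S.IsPositive := isPositive_inv_smul_rankOne_self hα_pos (T e)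
  refine ⟨S, fun u => ?_, hS.inner_left_eq_inner_right, ?_, fun v _ => ?_⟩
  · have hSe : S e = T e := inv_inner_smul_rankOne_self_apply hα_pos.ne'
    have h := LinearMap.ext_of_finrank_eq_one hU (norm_ne_zero_iff.mp (he ▸ one_ne_zero))
      (f := ((S ∘L U.subtypeL : U →L[ℂ] V) : U →ₗ[ℂ] V)) (g := (T : U →ₗ[ℂ] V)) hSe
    exact LinearMap.congr_fun h u
  · have hTe : ‖T e‖ ≤ ‖T‖ := T.unit_le_opNorm e he.le
    have hα_norm : ε ≤ ‖α‖ := hαε.trans (Complex.re_le_norm α)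
    calc ‖S‖ = ‖α‖⁻¹ * (‖T e‖ * ‖T e‖) := by rw [norm_smul, norm_inv, norm_rankOne]
      _ ≤ ε⁻¹ * ‖T‖ ^ 2 := by rw [sq]; gcongr
      _ ≤ ‖T‖ + ε⁻¹ * ‖T‖ ^ 2 := le_add_of_nonneg_left (norm_nonneg T)
      _ ≤ √2 * (‖T‖ + ε⁻¹ * ‖T‖ ^ 2) :=
        le_mul_of_one_le_left (by positivity) Real.one_lt_sqrt_two.le
  · exact (RCLike.nonneg_iff.mp (hS.inner_nonneg_left v)).symm

/-- Let `V` be the complexification of a real Hilbert space, encoded by a conjugation `J`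
(an antilinear isometric involution), with real part `V_ℝ = {x | J x = x}`. Let `U ⊆ V` be a
one-dimensional subspace with `U ∩ V_ℝ ≠ 0` and `T : U → V` bounded with `T(U ∩ V_ℝ) ⊆ V_ℝ`
and numerical range contained in `{z : Re z ≥ ε}` for some `ε > 0`. Then there is a
self-adjoint bounded extension `T̂ : V → V` of `T` with `‖T̂‖ ≤ √2 (‖T‖ + ε⁻¹ ‖T‖²)` and
numerical range contained in `ℝ≥0`. -/
theorem stmt_4 {V : Type*} [NormedAddCommGroup V] [InnerProductSpace ℂ V] [CompleteSpace V]
    (J : V →ₗ⋆[ℂ] V) (hJinv : ∀ x, J (J x) = x)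
    (hJinner : ∀ x y : V, ⟪J x, J y⟫_ℂ = conj ⟪x, y⟫_ℂ)
    (U : Submodule ℂ V) (hU : Module.finrank ℂ U = 1)
    (hUreal : ∃ u₀ : U, (u₀ : V) ≠ 0 ∧ J (u₀ : V) = (u₀ : V))
    (T : U →L[ℂ] V) (hTreal : ∀ u : U, J (u : V) = (u : V) → J (T u) = T u)
    (ε : ℝ) (hε : 0 < ε)
    (hT : ∀ u : U, ‖u‖ = 1 → ε ≤ (⟪T u, (u : V)⟫_ℂ).re) :
    ∃ That : V →L[ℂ] V, (∀ u : U, That u = T u) ∧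
      (∀ x y : V, ⟪That x, y⟫_ℂ = ⟪x, That y⟫_ℂ) ∧
      ‖That‖ ≤ Real.sqrt 2 * (‖T‖ + ε⁻¹ * ‖T‖ ^ 2) ∧
      ∀ v : V, ‖v‖ = 1 → (⟪That v, v⟫_ℂ).im = 0 ∧ 0 ≤ (⟪That v, v⟫_ℂ).re :=
  stmt_4_general J hJinner U hU hUreal T hTreal ε hε hT
end

section
/- Let V be the complexification of a real Hilbert space, U ⊆ V a one-dimensional subspace, and b : U × V → ℂ a sesquilinear form such that |b(u,v)| ≤ M‖u‖‖v‖ and Re b(u,u) ≥ α‖u‖² for all u ∈ U, v ∈ V, where α, M > 0. Then b extends to a sesquilinear form a : V × V → ℂ satisfying |a(u,v)| ≤ [√2(M + α/2 + 2α⁻¹(M + α/2)²) + α/2]‖u‖‖v‖ and Re a(u,u) ≥ (α/2)‖u‖² for all u, v ∈ V. -/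
/-
With `P` the orthogonal projection onto `U` and `Q = 1 - P`, take
`a(u, v) = b(P u, v) - conj b(P v, Q u) + (α/2) ⟪Q v, Q u⟫`. It agrees with `b` on `U × V`, and
each of its terms is bounded by a multiple of `‖u‖ ‖v‖`, which gives `‖a‖ ≤ 2M + α/2`. On the
diagonal the middle term cancels the real part of the cross term `b(P u, Q u)`, so
`Re a(u, u) = Re b(P u, P u) + (α/2) ‖Q u‖² ≥ α ‖P u‖² + (α/2) ‖Q u‖² ≥ (α/2) ‖u‖²`.
-/

open scoped ComplexConjugate InnerProductSpace

namespace Submodule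

variable {V : Type*} [NormedAddCommGroup V] [InnerProductSpace ℂ V]
  (U : Submodule ℂ V) [U.HasOrthogonalProjection]

noncomputable def extendSesqForm (b : U →ₗ[ℂ] V →ₗ⋆[ℂ] ℂ) (c : ℝ) :
    V →ₗ[ℂ] V →ₗ⋆[ℂ] ℂ :=
  LinearMap.mk₂'ₛₗ (RingHom.id ℂ) (starRingEnd ℂ)
    (fun u v ↦ b (U.orthogonalProjectionOnto u) v
      - conj (b (U.orthogonalProjectionOnto v) (Uᗮ.starProjection u))
      + c * ⟪Uᗮ.starProjection v, Uᗮ.starProjection u⟫_ℂ)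
    (fun u₁ u₂ v ↦ by simp only [map_add, LinearMap.add_apply, inner_add_right]; ring)
    (fun z u v ↦ by
      simp only [map_smul, LinearMap.smul_apply, LinearMap.map_smulₛₗ, inner_smul_right,
        smul_eq_mul, map_mul, Complex.conj_conj, RingHom.id_apply]; ring)
    (fun u v₁ v₂ ↦ by simp only [map_add, LinearMap.add_apply, inner_add_left]; ring)
    (fun z u v ↦ by
      simp only [map_smul, LinearMap.smul_apply, LinearMap.map_smulₛₗ, inner_smul_left,
        smul_eq_mul, map_mul]; ring)

variable {U}

@[simp]
theorem extendSesqForm_apply (b : U →ₗ[ℂ] V →ₗ⋆[ℂ] ℂ) (c : ℝ) (u v : V) :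
    U.extendSesqForm b c u v = b (U.orthogonalProjectionOnto u) v
      - conj (b (U.orthogonalProjectionOnto v) (Uᗮ.starProjection u))
      + c * ⟪Uᗮ.starProjection v, Uᗮ.starProjection u⟫_ℂ :=
  rfl

theorem extendSesqForm_apply_coe (b : U →ₗ[ℂ] V →ₗ⋆[ℂ] ℂ) (c : ℝ) (u : U) (v : V) :
    U.extendSesqForm b c u v = b u v := by
  simp [starProjection_orthogonal_apply_eq_zero u.2]

theorem norm_extendSesqForm_apply_le {b : U →ₗ[ℂ] V →ₗ⋆[ℂ] ℂ} {M : ℝ} (hM : 0 ≤ M)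
    (hb : ∀ (u : U) (v : V), ‖b u v‖ ≤ M * ‖(u : V)‖ * ‖v‖) (c : ℝ) (u v : V) :
    ‖U.extendSesqForm b c u v‖ ≤ (2 * M + |c|) * ‖u‖ * ‖v‖ := by
  have hPu : ‖(U.orthogonalProjectionOnto u : V)‖ ≤ ‖u‖ :=
    U.norm_orthogonalProjectionOnto_apply_le u
  have hPv : ‖(U.orthogonalProjectionOnto v : V)‖ ≤ ‖v‖ :=
    U.norm_orthogonalProjectionOnto_apply_le v
  have hQu := Uᗮ.norm_starProjection_apply_le u
  have hQv := Uᗮ.norm_starProjection_apply_le v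
  calc ‖U.extendSesqForm b c u v‖
      ≤ ‖b (U.orthogonalProjectionOnto u) v‖
        + ‖b (U.orthogonalProjectionOnto v) (Uᗮ.starProjection u)‖
        + |c| * ‖⟪Uᗮ.starProjection v, Uᗮ.starProjection u⟫_ℂ‖ := by
        rw [extendSesqForm_apply]
        refine (norm_add_le _ _).trans (add_le_add ((norm_sub_le _ _).trans_eq ?_) ?_)
        · rw [RCLike.norm_conj]
        · rw [norm_mul, Complex.norm_real, Real.norm_eq_abs]
    _ ≤ M * ‖u‖ * ‖v‖ + M * ‖v‖ * ‖u‖ + |c| * (‖v‖ * ‖u‖) := by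
        gcongr
        · exact (hb _ _).trans (by gcongr)
        · exact (hb _ _).trans (by gcongr)
        · exact (norm_inner_le_norm _ _).trans (by gcongr)
    _ = (2 * M + |c|) * ‖u‖ * ‖v‖ := by ring

theorem re_extendSesqForm_self (b : U →ₗ[ℂ] V →ₗ⋆[ℂ] ℂ) (c : ℝ) (u : V) :
    (U.extendSesqForm b c u u).re
      = (b (U.orthogonalProjectionOnto u) (U.orthogonalProjectionOnto u)).re
        + c * ‖Uᗮ.starProjection u‖ ^ 2 := by
  have hsplit : b (U.orthogonalProjectionOnto u) u
      = b (U.orthogonalProjectionOnto u) (U.orthogonalProjectionOnto u)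
        + b (U.orthogonalProjectionOnto u) (Uᗮ.starProjection u) := by
    rw [← map_add, ← starProjection_apply, starProjection_add_starProjection_orthogonal]
  rw [extendSesqForm_apply, hsplit, inner_self_eq_norm_sq_to_K]
  simp only [Complex.add_re, Complex.sub_re, Complex.conj_re, add_sub_cancel_right,
    Complex.re_ofReal_mul]
  norm_cast

end Submodule

theorem two_mul_add_half_le {M α : ℝ} (hM : 0 ≤ M) (hα : 0 < α) :
    2 * M + α / 2 ≤ Real.sqrt 2 * (M + α / 2 + 2 * α⁻¹ * (M + α / 2) ^ 2) + α / 2 := by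
  have hamgm : 2 * M ≤ 2 * α⁻¹ * (M + α / 2) ^ 2 := by
    rw [mul_assoc, ← div_eq_inv_mul]
    gcongr 2 * ?_
    rw [le_div_iff₀ hα]
    nlinarith [sq_nonneg (M - α / 2)]
  gcongr ?_ + _
  calc 2 * M ≤ M + α / 2 + 2 * α⁻¹ * (M + α / 2) ^ 2 := by linarith
    _ ≤ _ := le_mul_of_one_le_left (by positivity) (Real.one_le_sqrt.mpr one_le_two)

theorem stmt_6_general {V : Type*} [NormedAddCommGroup V] [InnerProductSpace ℂ V]
    (U : Submodule ℂ V) (hU : Module.finrank ℂ U = 1)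
    (b : U →ₗ[ℂ] (V →ₗ⋆[ℂ] ℂ)) (M α : ℝ) (hM : 0 < M) (hα : 0 < α)
    (hbound : ∀ (u : U) (v : V), ‖b u v‖ ≤ M * ‖(u : V)‖ * ‖v‖)
    (hcoer : ∀ u : U, α * ‖(u : V)‖ ^ 2 ≤ (b u (u : V)).re) :
    ∃ a : V →ₗ[ℂ] (V →ₗ⋆[ℂ] ℂ),
      (∀ (u : U) (v : V), a (u : V) v = b u v) ∧
      (∀ u v : V, ‖a u v‖ ≤
        (Real.sqrt 2 * (M + α / 2 + 2 * α⁻¹ * (M + α / 2) ^ 2) + α / 2) * ‖u‖ * ‖v‖) ∧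
      (∀ u : V, α / 2 * ‖u‖ ^ 2 ≤ (a u u).re) := by
  have : FiniteDimensional ℂ U := Module.finite_of_finrank_eq_succ hU
  refine ⟨U.extendSesqForm b (α / 2), U.extendSesqForm_apply_coe b _, fun u v ↦ ?_, fun u ↦ ?_⟩
  · calc ‖U.extendSesqForm b (α / 2) u v‖ ≤ (2 * M + |α / 2|) * ‖u‖ * ‖v‖ :=
          U.norm_extendSesqForm_apply_le hM.le hbound _ u v
      _ ≤ _ := by
          rw [abs_of_pos (half_pos hα)]
          gcongr ?_ * _ * _
          exact two_mul_add_half_le hM.le hα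
  · have hpyth := U.norm_sq_eq_add_norm_sq_starProjection u
    have hPu := hcoer (U.orthogonalProjectionOnto u)
    rw [U.re_extendSesqForm_self]
    rw [← Submodule.starProjection_apply] at hPu ⊢
    nlinarith [mul_nonneg hα.le (sq_nonneg ‖U.starProjection u‖)]

/-- A bounded coercive sesquilinear form `b : U × V → ℂ` (linear in the first, conjugate-linear
in the second argument) defined on a one-dimensional subspace `U` of a complex Hilbert space `V`
extends to a sesquilinear form `a : V × V → ℂ` with
`|a(u,v)| ≤ [√2 (M + α/2 + 2 α⁻¹ (M + α/2)²) + α/2] ‖u‖ ‖v‖` and `Re a(u,u) ≥ (α/2) ‖u‖²`. -/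
theorem stmt_6 {V : Type*} [NormedAddCommGroup V] [InnerProductSpace ℂ V] [CompleteSpace V]
    (U : Submodule ℂ V) (hU : Module.finrank ℂ U = 1)
    (b : U →ₗ[ℂ] (V →ₗ⋆[ℂ] ℂ)) (M α : ℝ) (hM : 0 < M) (hα : 0 < α)
    (hbound : ∀ (u : U) (v : V), ‖b u v‖ ≤ M * ‖(u : V)‖ * ‖v‖)
    (hcoer : ∀ u : U, α * ‖(u : V)‖ ^ 2 ≤ (b u (u : V)).re) :
    ∃ a : V →ₗ[ℂ] (V →ₗ⋆[ℂ] ℂ),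
      (∀ (u : U) (v : V), a (u : V) v = b u v) ∧
      (∀ u v : V, ‖a u v‖ ≤
        (Real.sqrt 2 * (M + α / 2 + 2 * α⁻¹ * (M + α / 2) ^ 2) + α / 2) * ‖u‖ * ‖v‖) ∧
      (∀ u : V, α / 2 * ‖u‖ ^ 2 ≤ (a u u).re) :=
  stmt_6_general U hU b M α hM hα hbound hcoer
end

section
/- For all s, t ∈ [0,T] with |t-s| ≤ 1, ∫₀¹ x^{-1/2} |sin(t x^{-3/2}) - sin(s x^{-3/2})|² dx ≤ (10/3)|t-s|; hence t ↦ sin(t x^{-3/2}) · x is (1/2)-Hölder continuous from [0,T] into L²((0,1); x^{-3/2}dx). -/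
/-!
Write `φ(x) = x^(-3/2)`, so that the integrand is `x^(1/2) (sin(tφ) - sin(sφ))²`. On `(0, δ]` bound
`|sin(tφ) - sin(sφ)| ≤ 2`, on `(δ, 1]` bound it by `|t - s| φ`. The two pieces then integrate to
at most `(8/3) δ^(3/2)` and `(2/3) |t - s|² δ^(-3/2)`, and `δ = |t - s|^(2/3)` balances them to a
total of `(10/3) |t - s|`.
-/

open MeasureTheory Set Real

theorem setIntegral_union_le_add_of_le {α : Type*} [MeasurableSpace α] {μ : Measure α}
    {s t : Set α} {f g₁ g₂ : α → ℝ} (hdisj : Disjoint s t) (hs : MeasurableSet s)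
    (ht : MeasurableSet t) (hf : ∀ x ∈ s ∪ t, 0 ≤ f x) (hfs : ∀ x ∈ s, f x ≤ g₁ x)
    (hft : ∀ x ∈ t, f x ≤ g₂ x) (hg₁ : IntegrableOn g₁ s μ) (hg₂ : IntegrableOn g₂ t μ) :
    ∫ x in s ∪ t, f x ∂μ ≤ (∫ x in s, g₁ x ∂μ) + ∫ x in t, g₂ x ∂μ := by
  classical
  set g := s.piecewise g₁ g₂
  have hgs : EqOn g g₁ s := fun x hx => piecewise_eq_of_mem _ _ _ hx
  have hgt : EqOn g g₂ t := fun x hx =>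
    piecewise_eq_of_notMem _ _ _ (hdisj.notMem_of_mem_right hx)
  have hfg : ∀ x ∈ s ∪ t, f x ≤ g x := by
    rintro x (hx | hx)
    · exact (hfs x hx).trans_eq (hgs hx).symm
    · exact (hft x hx).trans_eq (hgt hx).symm
  have hgs' : IntegrableOn g s μ := hg₁.congr_fun hgs.symm hs
  have hgt' : IntegrableOn g t μ := hg₂.congr_fun hgt.symm ht
  calc ∫ x in s ∪ t, f x ∂μ ≤ ∫ x in s ∪ t, g x ∂μ :=
        integral_mono_of_nonneg (ae_restrict_of_forall_mem (hs.union ht) hf) (hgs'.union hgt')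
          (ae_restrict_of_forall_mem (hs.union ht) hfg)
    _ = (∫ x in s, g₁ x ∂μ) + ∫ x in t, g₂ x ∂μ := by
        rw [setIntegral_union hdisj ht hgs' hgt', setIntegral_congr_fun hs hgs,
          setIntegral_congr_fun ht hgt]

theorem integral_Ioc_zero_rpow {r b : ℝ} (hr : -1 < r) (hb : 0 ≤ b) :
    ∫ x in Ioc 0 b, x ^ r = b ^ (r + 1) / (r + 1) := by
  rw [← intervalIntegral.integral_of_le hb, integral_rpow (Or.inl hr),
    zero_rpow (by linarith), sub_zero]

theorem integral_Ioc_rpow_of_pos {r a b : ℝ} (hr : r ≠ -1) (ha : 0 < a) (hab : a ≤ b) :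
    ∫ x in Ioc a b, x ^ r = (b ^ (r + 1) - a ^ (r + 1)) / (r + 1) := by
  rw [← intervalIntegral.integral_of_le hab,
    integral_rpow (Or.inr ⟨hr, notMem_uIcc_of_lt ha (ha.trans_le hab)⟩)]

theorem sq_sin_sub_sin_le_four (a b : ℝ) : (sin a - sin b) ^ 2 ≤ 4 := by
  nlinarith [sin_le_one a, neg_one_le_sin a, sin_le_one b, neg_one_le_sin b]

theorem sq_sin_sub_sin_le_sq_sub (a b : ℝ) : (sin a - sin b) ^ 2 ≤ (a - b) ^ 2 := by
  simpa only [sq_abs] using pow_le_pow_left₀ (abs_nonneg _) (abs_sin_sub_sin_le a b) 2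

noncomputable def chirpIncrementSq (s t x : ℝ) : ℝ :=
  x ^ (-(3 : ℝ) / 2) *
    |x * sin (t * x ^ (-(3 : ℝ) / 2)) - x * sin (s * x ^ (-(3 : ℝ) / 2))| ^ 2

section chirpIncrementSq

variable {s t x : ℝ}

theorem chirpIncrementSq_nonneg (hx : 0 ≤ x) : 0 ≤ chirpIncrementSq s t x :=
  mul_nonneg (rpow_nonneg hx _) (sq_nonneg _)

theorem chirpIncrementSq_eq (hx : 0 < x) :
    chirpIncrementSq s t x = x ^ (1 / 2 : ℝ) *
      (sin (t * x ^ (-(3 : ℝ) / 2)) - sin (s * x ^ (-(3 : ℝ) / 2))) ^ 2 := by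
  have hpow : x ^ (-(3 : ℝ) / 2) * x ^ 2 = x ^ (1 / 2 : ℝ) := by
    rw [← rpow_natCast x 2, ← rpow_add hx]
    norm_num
  rw [chirpIncrementSq, ← mul_sub, sq_abs, mul_pow, ← mul_assoc, hpow]

theorem chirpIncrementSq_le_four_mul (hx : 0 < x) :
    chirpIncrementSq s t x ≤ 4 * x ^ (1 / 2 : ℝ) := by
  rw [chirpIncrementSq_eq hx, mul_comm 4]
  exact mul_le_mul_of_nonneg_left (sq_sin_sub_sin_le_four _ _) (rpow_nonneg hx.le _)

theorem chirpIncrementSq_le_sq_mul (hx : 0 < x) :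
    chirpIncrementSq s t x ≤ |t - s| ^ 2 * x ^ (-(5 : ℝ) / 2) := by
  have hpow : x ^ (1 / 2 : ℝ) * (x ^ (-(3 : ℝ) / 2)) ^ 2 = x ^ (-(5 : ℝ) / 2) := by
    rw [← rpow_natCast, ← rpow_mul hx.le, ← rpow_add hx]
    norm_num
  calc chirpIncrementSq s t x
      ≤ x ^ (1 / 2 : ℝ) * (t * x ^ (-(3 : ℝ) / 2) - s * x ^ (-(3 : ℝ) / 2)) ^ 2 := by
        rw [chirpIncrementSq_eq hx]
        exact mul_le_mul_of_nonneg_left (sq_sin_sub_sin_le_sq_sub _ _) (rpow_nonneg hx.le _)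
    _ = |t - s| ^ 2 * x ^ (-(5 : ℝ) / 2) := by
        rw [← hpow, sq_abs]
        ring

end chirpIncrementSq

theorem integral_chirpIncrementSq_le {s t : ℝ} (hpos : 0 < |t - s|) (hle : |t - s| ≤ 1) :
    ∫ x in Ioc 0 1, chirpIncrementSq s t x ≤ 10 / 3 * |t - s| := by
  set h := |t - s|
  set δ := h ^ (2 / 3 : ℝ)
  have hδpos : 0 < δ := rpow_pos_of_pos hpos _
  have hδ1 : δ ≤ 1 := rpow_le_one hpos.le hle (by norm_num)
  have hδ_pow : ∀ r : ℝ, δ ^ r = h ^ (2 / 3 * r) := fun r => (rpow_mul hpos.le _ _).symm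
  have hsplit := setIntegral_union_le_add_of_le (μ := volume) (f := chirpIncrementSq s t)
    (Ioc_disjoint_Ioc_of_le le_rfl) measurableSet_Ioc measurableSet_Ioc
    (fun x hx => chirpIncrementSq_nonneg (by rcases hx with hx | hx <;> linarith [hx.1]))
    (fun x hx => chirpIncrementSq_le_four_mul hx.1)
    (fun x hx => chirpIncrementSq_le_sq_mul (hδpos.trans hx.1))
    ((intervalIntegral.intervalIntegrable_rpow' (by norm_num)).1.const_mul 4)
    ((intervalIntegral.intervalIntegrable_rpow
      (Or.inr (notMem_uIcc_of_lt hδpos (hδpos.trans_le hδ1)))).1.const_mul _)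
  rw [Ioc_union_Ioc_eq_Ioc hδpos.le hδ1, integral_const_mul, integral_const_mul,
    integral_Ioc_zero_rpow (by norm_num) hδpos.le,
    integral_Ioc_rpow_of_pos (by norm_num) hδpos hδ1, one_rpow, hδ_pow, hδ_pow] at hsplit
  norm_num [rpow_neg_one] at hsplit
  rw [← sq_abs (t - s)] at hsplit
  refine hsplit.trans ?_
  field_simp
  nlinarith [pow_pos hpos 3]

theorem stmt_17_general (s t : ℝ) (hst : |t - s| ≤ 1) :
    ∫ x in Ioc (0 : ℝ) 1,
        x ^ (-(3 : ℝ) / 2) *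
          |x * Real.sin (t * x ^ (-(3 : ℝ) / 2)) - x * Real.sin (s * x ^ (-(3 : ℝ) / 2))| ^ 2
      ≤ 10 / 3 * |t - s| := by
  rcases (abs_nonneg (t - s)).eq_or_lt with h0 | hpos
  · obtain rfl : t = s := sub_eq_zero.mp (abs_eq_zero.mp h0.symm)
    simp
  · exact integral_chirpIncrementSq_le hpos hst

/-- For all `s, t ∈ [0,T]` with `|t - s| ≤ 1`, with `c(x) = x` and weight `w(x) = x^(-3/2)`
(so that `w(x)|c(x)|² = x^(1/2)`),
`∫₀¹ x^(-3/2) |x sin(t x^(-3/2)) - x sin(s x^(-3/2))|² dx ≤ (10/3) |t - s|`; hence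
`t ↦ x sin(t x^(-3/2))` is `1/2`-Hölder continuous from `[0,T]` into `L²((0,1); x^(-3/2) dx)`. -/
theorem stmt_17 (T : ℝ) (hT : 0 < T) (s t : ℝ) (hs : s ∈ Icc 0 T) (ht : t ∈ Icc 0 T)
    (hst : |t - s| ≤ 1) :
    ∫ x in Ioc (0 : ℝ) 1,
        x ^ (-(3 : ℝ) / 2) *
          |x * Real.sin (t * x ^ (-(3 : ℝ) / 2)) - x * Real.sin (s * x ^ (-(3 : ℝ) / 2))| ^ 2
      ≤ 10 / 3 * |t - s| :=
  stmt_17_general s t hst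
end
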